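/- arXiv:1711.09833 — 3 statements merged into one kernel-verified Lean document; each statement's English description precedes it below -/
import Mathlib

section
/- Let ρ : 𝓧 → ℝ be a convex risk measure on a model space 𝓧. Then ρ is representable, i.e. ρ(x) = sup{E[x y] − ρ^#(y) : y ∈ 𝓧^#} for all x ∈ 𝓧, if and only if ρ(x) = sup{E[x y] − ρ^#(y) : y ∈ 𝓧^#, y ≤ 0 a.s., E[y] = −1} for all x ∈ 𝓧. -/
open MeasureTheory Filter Topology
open scoped ENNReal Topology

variable {Ω : Type*}

/-- A model space: a solid linear subspace of `L⁰(𝓔)` consisting of integrable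
functions and containing the (classes of) constant functions. -/
def IsModelSpace [MeasurableSpace Ω] (P : Measure Ω) (X : Set (Ω → ℝ)) : Prop :=
  (∀ x ∈ X, Measurable x) ∧
  (∀ x ∈ X, ∀ y ∈ X, x + y ∈ X) ∧
  (∀ c : ℝ, ∀ x ∈ X, (fun ω => c * x ω) ∈ X) ∧
  (∀ x y : Ω → ℝ, Measurable x → y ∈ X → (∀ᵐ ω ∂P, |x ω| ≤ |y ω|) → x ∈ X) ∧
  (∀ x ∈ X, Integrable x P) ∧
  (∀ c : ℝ, (fun _ => c) ∈ X)

/-- The Köthe dual `𝓧^#` of a model space. -/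
def kotheDual [MeasurableSpace Ω] (P : Measure Ω) (X : Set (Ω → ℝ)) : Set (Ω → ℝ) :=
  {y | Measurable y ∧ ∀ x ∈ X, Integrable (fun ω => x ω * y ω) P}

/-- A convex risk measure on a model space `X`. -/
def IsConvexRiskMeasure [MeasurableSpace Ω] (P : Measure Ω) (X : Set (Ω → ℝ))
    (ρ : (Ω → ℝ) → ℝ) : Prop :=
  (∀ x ∈ X, ∀ y ∈ X, ∀ r : ℝ, 0 ≤ r → r ≤ 1 →
    ρ (fun ω => r * x ω + (1 - r) * y ω) ≤ r * ρ x + (1 - r) * ρ y) ∧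
  (∀ x ∈ X, ∀ y ∈ X, (∀ᵐ ω ∂P, x ω ≤ y ω) → ρ y ≤ ρ x) ∧
  (∀ x ∈ X, ∀ r : ℝ, ρ (fun ω => x ω + r) = ρ x - r)

/-- The Fenchel transform `ρ^#(y) = sup {E[x y] - ρ(x) : x ∈ X}`, with values in
the extended reals. -/
noncomputable def fenchel [MeasurableSpace Ω] (P : Measure Ω) (X : Set (Ω → ℝ))
    (ρ : (Ω → ℝ) → ℝ) (y : Ω → ℝ) : EReal :=
  sSup ((fun x => (((∫ ω, x ω * y ω ∂P) - ρ x : ℝ) : EReal)) '' X)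

/-- `ρ` is representable over a set `D ⊆ 𝓧^#` of dual variables:
`ρ(x) = sup {E[x y] - ρ^#(y) : y ∈ D}` for all `x ∈ 𝓧`. -/
def IsRepresentableOver [MeasurableSpace Ω] (P : Measure Ω) (X : Set (Ω → ℝ))
    (ρ : (Ω → ℝ) → ℝ) (D : Set (Ω → ℝ)) : Prop :=
  ∀ x ∈ X, (ρ x : EReal) =
    sSup ((fun y => (((∫ ω, x ω * y ω ∂P : ℝ)) : EReal) - fenchel P X ρ y) '' D)

/- A dual variable `y` with `ρ^#(y) < ∞` must be a negative probability density. Cash invariance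
makes `E[c y] - ρ(c) = c (E[y] + 1) - ρ(0)` affine in the constant `c`, so it is unbounded unless
`E[y] = -1`; and if `y > 0` on a non-null set `A`, monotonicity gives
`E[t 1_A y] - ρ(t 1_A) ≥ t E[1_A y] - ρ(0) → ∞` as `t → ∞`. Such `y` contribute `-∞` to the
supremum defining the representation, so dropping them changes nothing. -/

lemma fenchel_eq_top_of_forall_exists_lt [MeasurableSpace Ω] {P : Measure Ω}
    {X : Set (Ω → ℝ)} {ρ : (Ω → ℝ) → ℝ} {y : Ω → ℝ}
    (h : ∀ r : ℝ, ∃ x ∈ X, r < ∫ ω, x ω * y ω ∂P - ρ x) :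
    fenchel P X ρ y = ⊤ := by
  refine sSup_eq_top.2 fun b hb => ?_
  obtain ⟨r, hbr, -⟩ := EReal.lt_iff_exists_real_btwn.1 hb
  obtain ⟨x, hx, hrx⟩ := h r
  exact ⟨_, ⟨x, hx, rfl⟩, hbr.trans (EReal.coe_lt_coe_iff.2 hrx)⟩

lemma fenchel_eq_top_of_integral_ne_neg_one [MeasurableSpace Ω] {P : Measure Ω}
    {X : Set (Ω → ℝ)} (hX : IsModelSpace P X) {ρ : (Ω → ℝ) → ℝ}
    (hρ : IsConvexRiskMeasure P X ρ) {y : Ω → ℝ} (hy : ∫ ω, y ω ∂P ≠ -1) :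
    fenchel P X ρ y = ⊤ := by
  obtain ⟨-, -, -, -, -, hconst⟩ := hX
  obtain ⟨-, -, hcash⟩ := hρ
  have hd : ∫ ω, y ω ∂P + 1 ≠ 0 := fun h => hy (eq_neg_of_add_eq_zero_left h)
  refine fenchel_eq_top_of_forall_exists_lt fun r => ?_
  set c := (r + ρ (fun _ => 0) + 1) / (∫ ω, y ω ∂P + 1)
  have hc : c * (∫ ω, y ω ∂P + 1) = r + ρ (fun _ => 0) + 1 := div_mul_cancel₀ _ hd
  have hρc : ρ (fun _ => c) = ρ (fun _ => 0) - c := by simpa using hcash _ (hconst 0) c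
  refine ⟨fun _ => c, hconst c, ?_⟩
  rw [integral_const_mul, hρc]
  linarith

lemma setIntegral_pos_of_not_ae_nonpos {α : Type*} [MeasurableSpace α] {μ : Measure α}
    {f : α → ℝ} (hfm : Measurable f) (hf : Integrable f μ) (h : ¬ ∀ᵐ a ∂μ, f a ≤ 0) :
    0 < ∫ a in {a | 0 < f a}, f a ∂μ := by
  have hA : MeasurableSet {a | 0 < f a} := measurableSet_lt measurable_const hfm
  have hμA : 0 < μ {a | 0 < f a} := by simpa [ae_iff, pos_iff_ne_zero] using h
  rw [setIntegral_pos_iff_support_of_nonneg_ae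
    ((ae_restrict_iff' hA).2 (.of_forall fun a ha => le_of_lt ha)) hf.integrableOn]
  exact hμA.trans_le (measure_mono fun a ha => ⟨ne_of_gt ha, ha⟩)

lemma fenchel_eq_top_of_not_ae_nonpos [MeasurableSpace Ω] {P : Measure Ω}
    {X : Set (Ω → ℝ)} (hX : IsModelSpace P X) {ρ : (Ω → ℝ) → ℝ}
    (hρ : IsConvexRiskMeasure P X ρ) {y : Ω → ℝ} (hy : y ∈ kotheDual P X)
    (hpos : ¬ ∀ᵐ ω ∂P, y ω ≤ 0) : fenchel P X ρ y = ⊤ := by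
  obtain ⟨-, -, hsmul, hsolid, -, hconst⟩ := hX
  obtain ⟨-, hmono, -⟩ := hρ
  set A := {ω | 0 < y ω}
  have hA : MeasurableSet A := measurableSet_lt measurable_const hy.1
  have hyA : 0 < ∫ ω in A, y ω ∂P :=
    setIntegral_pos_of_not_ae_nonpos hy.1 (by simpa using hy.2 _ (hconst 1)) hpos
  have h1A : A.indicator 1 ∈ X :=
    hsolid _ _ (measurable_const.indicator hA) (hconst 1) (.of_forall fun ω => by
      by_cases h : ω ∈ A <;> simp [h])
  refine fenchel_eq_top_of_forall_exists_lt fun r => ?_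
  set t := |r + ρ (fun _ => 0) + 1| / ∫ ω in A, y ω ∂P
  have ht : 0 ≤ t := by positivity
  have hxX : (fun ω => t * A.indicator 1 ω) ∈ X := hsmul t _ h1A
  have hintegral : ∫ ω, t * A.indicator 1 ω * y ω ∂P = |r + ρ (fun _ => 0) + 1| := by
    have h1Ay : (fun ω => t * A.indicator 1 ω * y ω) = fun ω => t * A.indicator y ω := by
      ext ω; by_cases h : ω ∈ A <;> simp [h]
    rw [h1Ay, integral_const_mul, integral_indicator hA]
    exact div_mul_cancel₀ _ hyA.ne'
  have hρx : ρ (fun ω => t * A.indicator 1 ω) ≤ ρ (fun _ => 0) :=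
    hmono _ (hconst 0) _ hxX (.of_forall fun ω => by
      by_cases h : ω ∈ A <;> simp [h, ht])
  refine ⟨_, hxX, ?_⟩
  rw [hintegral]
  linarith [le_abs_self (r + ρ (fun _ => 0) + 1)]

lemma isRepresentableOver_iff_of_subset_of_fenchel_eq_top [MeasurableSpace Ω] {P : Measure Ω}
    {X : Set (Ω → ℝ)} {ρ : (Ω → ℝ) → ℝ} {D D' : Set (Ω → ℝ)} (hD : D' ⊆ D)
    (htop : ∀ y ∈ D, y ∉ D' → fenchel P X ρ y = ⊤) :
    IsRepresentableOver P X ρ D ↔ IsRepresentableOver P X ρ D' := by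
  suffices h : ∀ x : Ω → ℝ,
      sSup ((fun y => ((∫ ω, x ω * y ω ∂P : ℝ) : EReal) - fenchel P X ρ y) '' D) =
        sSup ((fun y => ((∫ ω, x ω * y ω ∂P : ℝ) : EReal) - fenchel P X ρ y) '' D') by
    simp only [IsRepresentableOver, h]
  refine fun x => le_antisymm (sSup_le ?_) (sSup_le_sSup (Set.image_mono hD))
  rintro _ ⟨y, hy, rfl⟩
  by_cases hy' : y ∈ D'
  · exact le_sSup ⟨y, hy', rfl⟩
  · simp [htop y hy hy']

theorem representable_iff_representable_over_probabilities_general [MeasurableSpace Ω]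
    (P : Measure Ω) (X : Set (Ω → ℝ)) (hX : IsModelSpace P X)
    (ρ : (Ω → ℝ) → ℝ) (hρ : IsConvexRiskMeasure P X ρ) :
    IsRepresentableOver P X ρ (kotheDual P X) ↔
      IsRepresentableOver P X ρ
        {y | y ∈ kotheDual P X ∧ (∀ᵐ ω ∂P, y ω ≤ 0) ∧ ∫ ω, y ω ∂P = -1} := by
  refine isRepresentableOver_iff_of_subset_of_fenchel_eq_top (fun y hy => hy.1) fun y hy hy' => ?_
  rcases not_and_or.1 fun h => hy' ⟨hy, h⟩ with hpos | hint
  · exact fenchel_eq_top_of_not_ae_nonpos hX hρ hy hpos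
  · exact fenchel_eq_top_of_integral_ne_neg_one hX hρ hint

/-- `ρ` is representable iff it is representable over the dual variables
`y ∈ 𝓧^#` with `y ≤ 0` a.s. and `E[y] = -1`. -/
theorem representable_iff_representable_over_probabilities [MeasurableSpace Ω]
    (P : Measure Ω) [IsProbabilityMeasure P] (X : Set (Ω → ℝ)) (hX : IsModelSpace P X)
    (ρ : (Ω → ℝ) → ℝ) (hρ : IsConvexRiskMeasure P X ρ) :
    IsRepresentableOver P X ρ (kotheDual P X) ↔
      IsRepresentableOver P X ρ
        {y | y ∈ kotheDual P X ∧ (∀ᵐ ω ∂P, y ω ≤ 0) ∧ ∫ ω, y ω ∂P = -1} :=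
  representable_iff_representable_over_probabilities_general P X hX ρ hρ
end

section
/- Let ρ : 𝓧 → ℝ be a convex risk measure on a model space 𝓧. Then ρ is representable (ρ(x) = sup{E[x y] − ρ^#(y) : y ∈ 𝓧^#} for all x ∈ 𝓧) if and only if ρ is lower semicontinuous with respect to the weak topology σ(𝓧, 𝓧^#). -/
open MeasureTheory Filter Topology
open scoped ENNReal Topology

variable {Ω : Type*}

/-- The weak topology `σ(A, B)` on (the subtype of) `A`: the initial topology induced
by the linear functionals `a ↦ E[a b]`, `b ∈ B`. -/
noncomputable def weakTop [MeasurableSpace Ω] (P : Measure Ω) (A B : Set (Ω → ℝ)) :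
    TopologicalSpace A :=
  ⨅ b ∈ B, TopologicalSpace.induced (fun a : A => ∫ ω, (a : Ω → ℝ) ω * b ω ∂P)
    inferInstance

/-!
A supremum of the weakly continuous affine maps `x ↦ E[x y] - ρ^#(y)` is weakly lower
semicontinuous. Conversely, if `ρ` is convex and weakly lower semicontinuous, its epigraph is
a closed convex subset of the locally convex space `(𝓧, σ(𝓧, 𝓧^#)) × ℝ`, so Hahn–Banach
separates from it any point `(x, m)` with `m < ρ x`; as `ρ` is finite at `x`, the separating
hyperplane is not vertical and is the graph of an affine minorant of `ρ`. Its linear part is a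
`σ(𝓧, 𝓧^#)`-continuous functional, hence `E[· y]` for some `y ∈ 𝓧^#`, and then
`ρ^#(y) ≤ E[x y] - m`.
-/

open Set

section FenchelMoreau

variable {E : Type*} [TopologicalSpace E] [AddCommGroup E] [Module ℝ E] [IsTopologicalAddGroup E]
  [ContinuousSMul ℝ E] [LocallyConvexSpace ℝ E]

theorem ConvexOn.exists_strongDual_sub_le {f : E → ℝ} (hconv : ConvexOn ℝ univ f)
    (hlsc : LowerSemicontinuous f) {x₀ : E} {m : ℝ} (hm : m < f x₀) :
    ∃ g : StrongDual ℝ E, ∀ x, g x - f x ≤ g x₀ - m := by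
  obtain ⟨φ, u, hφx₀, hφ⟩ := geometric_hahn_banach_point_closed
    (by simpa using hconv.convex_epigraph) hlsc.isClosed_epigraph (x := (x₀, m)) (not_le.2 hm)
  set s := φ (0, 1)
  have hφ_apply (x : E) (t : ℝ) : φ (x, t) = φ (x, 0) + t * s := by
    have hxt : ((x, t) : E × ℝ) = (x, 0) + t • (0, 1) := by simp
    rw [hxt, map_add, map_smul, smul_eq_mul]
  have hf (x : E) : u < φ (x, 0) + f x * s := by
    simpa only [hφ_apply x (f x)] using hφ (x, f x) (le_refl (f x))
  rw [hφ_apply] at hφx₀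
  have hs : 0 < s := by nlinarith [hf x₀]
  refine ⟨-s⁻¹ • φ.comp (ContinuousLinearMap.inl ℝ E ℝ), fun x => ?_⟩
  have hfx := hf x
  simp only [smul_apply, ContinuousLinearMap.comp_apply,
    ContinuousLinearMap.inl_apply, smul_eq_mul]
  field_simp
  linarith

end FenchelMoreau

section RiskMeasures

variable [MeasurableSpace Ω] {P : Measure Ω} {X : Set (Ω → ℝ)} {ρ : (Ω → ℝ) → ℝ}

def IsModelSpace.submodule (hX : IsModelSpace P X) : Submodule ℝ (Ω → ℝ) where
  carrier := X
  add_mem' {x y} hx hy := hX.2.1 x hx y hy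
  zero_mem' := hX.2.2.2.2.2 0
  smul_mem' c x hx := hX.2.2.1 c x hx

variable (P X) in
def kotheDualSubmodule : Submodule ℝ (Ω → ℝ) where
  carrier := kotheDual P X
  add_mem' {y y'} hy hy' := ⟨hy.1.add hy'.1, fun x hx =>
    ((hy.2 x hx).add (hy'.2 x hx)).congr (.of_forall fun ω => (mul_add ..).symm)⟩
  zero_mem' := ⟨measurable_const, fun x _ => by simp⟩
  smul_mem' c y hy := ⟨hy.1.const_smul c, fun x hx => by
    simpa only [Pi.smul_apply, smul_eq_mul, mul_left_comm] using (hy.2 x hx).const_mul c⟩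

theorem IsConvexRiskMeasure.convexOn (hρ : IsConvexRiskMeasure P X ρ) (hX : Convex ℝ X) :
    ConvexOn ℝ X ρ := by
  refine ⟨hX, fun x hx y hy a b ha _ hab => ?_⟩
  obtain rfl : b = 1 - a := by linarith
  exact hρ.1 x hx y hy a ha (by linarith)

variable (P) in
noncomputable def integralPairing {M D : Submodule ℝ (Ω → ℝ)}
    (hMD : ∀ x ∈ M, ∀ y ∈ D, Integrable (fun ω => x ω * y ω) P) : M →ₗ[ℝ] D →ₗ[ℝ] ℝ :=
  LinearMap.mk₂ ℝ (fun x y => ∫ ω, x.1 ω * y.1 ω ∂P)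
    (fun x x' y => by
      simp only [Submodule.coe_add, Pi.add_apply, add_mul]
      exact integral_add (hMD _ x.2 _ y.2) (hMD _ x'.2 _ y.2))
    (fun c x y => by
      simp only [Submodule.coe_smul, Pi.smul_apply, smul_eq_mul, mul_assoc, integral_const_mul])
    (fun x y y' => by
      simp only [Submodule.coe_add, Pi.add_apply, mul_add]
      exact integral_add (hMD _ x.2 _ y.2) (hMD _ x.2 _ y'.2))
    (fun c x y => by
      simp only [Submodule.coe_smul, Pi.smul_apply, smul_eq_mul, mul_left_comm,
        integral_const_mul])

theorem weakTop_eq_weakBilin {M D : Submodule ℝ (Ω → ℝ)}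
    (hMD : ∀ x ∈ M, ∀ y ∈ D, Integrable (fun ω => x ω * y ω) P) :
    weakTop P M D = WeakBilin.instTopologicalSpace (integralPairing P hMD) := by
  rw [WeakBilin.instTopologicalSpace, Pi.topologicalSpace, induced_iInf, weakTop, iInf_subtype]
  simp_rw [induced_compose]
  rfl

theorem continuous_weakTop_integral_mul {D : Set (Ω → ℝ)} {y : Ω → ℝ} (hy : y ∈ D) :
    Continuous[weakTop P X D, _] fun x : X => ∫ ω, x.1 ω * y ω ∂P :=
  continuous_iff_le_induced.2 (iInf₂_le y hy)

theorem IsRepresentableOver.isClosed_sublevel {D : Set (Ω → ℝ)}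
    (hρ : IsRepresentableOver P X ρ D) (r : ℝ) :
    IsClosed[weakTop P X D] {x : X | ρ x.1 ≤ r} := by
  let := weakTop P X D
  have hsublevel : {x : X | ρ x.1 ≤ r} = ⋂ y ∈ D,
      (fun x : X => ((∫ ω, x.1 ω * y ω ∂P : ℝ) : EReal)) ⁻¹' Iic (r + fenchel P X ρ y) := by
    ext x
    simp only [mem_ofPred_eq, mem_iInter, mem_preimage, mem_Iic]
    rw [← EReal.coe_le_coe_iff, hρ x x.2, sSup_le_iff, forall_mem_image]
    exact forall₂_congr fun y _ =>
      EReal.sub_le_iff_le_add (.inr (EReal.coe_ne_top r)) (.inr (EReal.coe_ne_bot r))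
  rw [hsublevel]
  exact isClosed_biInter fun y hy =>
    isClosed_Iic.preimage (continuous_coe_real_ereal.comp (continuous_weakTop_integral_mul hy))

theorem sub_fenchel_le {x : Ω → ℝ} (hx : x ∈ X) (y : Ω → ℝ) :
    ((∫ ω, x ω * y ω ∂P : ℝ) : EReal) - fenchel P X ρ y ≤ ρ x :=
  EReal.sub_le_of_le_add' <| by
    rw [← EReal.sub_le_iff_le_add (.inl (EReal.coe_ne_bot _)) (.inl (EReal.coe_ne_top _)),
      ← EReal.coe_sub]
    exact le_sSup ⟨x, hx, rfl⟩

theorem isRepresentableOver_of_forall_lt {D : Set (Ω → ℝ)}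
    (h : ∀ x ∈ X, ∀ m < ρ x, ∃ y ∈ D,
      ∀ x' ∈ X, ∫ ω, x' ω * y ω ∂P - ρ x' ≤ ∫ ω, x ω * y ω ∂P - m) :
    IsRepresentableOver P X ρ D := by
  intro x hx
  refine le_antisymm (le_of_forall_lt_imp_le_of_dense fun c hc => ?_)
    (sSup_le <| forall_mem_image.2 fun y _ => sub_fenchel_le hx y)
  induction c using EReal.rec with
  | bot => exact bot_le
  | top => exact absurd hc (by simp)
  | coe m =>
    obtain ⟨y, hy, hxy⟩ := h x hx m (EReal.coe_lt_coe_iff.1 hc)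
    have hfenchel : fenchel P X ρ y ≤ ((∫ ω, x ω * y ω ∂P - m : ℝ) : EReal) :=
      sSup_le <| forall_mem_image.2 fun x' hx' => EReal.coe_le_coe_iff.2 (hxy x' hx')
    refine le_sSup_of_le (mem_image_of_mem _ hy) ?_
    calc (m : EReal)
        = ((∫ ω, x ω * y ω ∂P : ℝ) : EReal) - ((∫ ω, x ω * y ω ∂P - m : ℝ) : EReal) := by
          rw [← EReal.coe_sub, sub_sub_cancel]
      _ ≤ _ := EReal.sub_le_sub le_rfl hfenchel

end RiskMeasures

theorem representable_iff_weakly_lsc_general [MeasurableSpace Ω] (P : Measure Ω)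
    (X : Set (Ω → ℝ)) (hX : IsModelSpace P X)
    (ρ : (Ω → ℝ) → ℝ) (hρ : IsConvexRiskMeasure P X ρ) :
    IsRepresentableOver P X ρ (kotheDual P X) ↔
      ∀ r : ℝ, IsClosed[weakTop P X (kotheDual P X)] {x : X | ρ x.1 ≤ r} := by
  refine ⟨IsRepresentableOver.isClosed_sublevel, fun hclosed => ?_⟩
  let M := hX.submodule
  let B := integralPairing P (M := M) (D := kotheDualSubmodule P X) fun x hx y hy => hy.2 x hx
  have hlsc : LowerSemicontinuous fun x : WeakBilin B => ρ x.1 := by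
    rw [lowerSemicontinuous_iff_isClosed_preimage, ← weakTop_eq_weakBilin]
    exact hclosed
  have hconv : ConvexOn ℝ univ fun x : WeakBilin B => ρ x.1 := by
    have hM : M.subtype ⁻¹' X = univ := Subtype.coe_preimage_self X
    exact hM ▸ (hρ.convexOn M.convex).comp_linearMap M.subtype
  refine isRepresentableOver_of_forall_lt fun x hx m hm => ?_
  obtain ⟨g, hg⟩ := hconv.exists_strongDual_sub_le hlsc (x₀ := ⟨x, hx⟩) hm
  obtain ⟨y, rfl⟩ := LinearMap.dualEmbedding_surjective B g
  exact ⟨y, y.2, fun x' hx' => hg ⟨x', hx'⟩⟩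

/-- a convex risk measure is representable iff it is lower semicontinuous
with respect to the weak topology `σ(𝓧, 𝓧^#)`, i.e. all its sublevel sets are
`σ(𝓧, 𝓧^#)`-closed. -/
theorem representable_iff_weakly_lsc [MeasurableSpace Ω] (P : Measure Ω)
    [IsProbabilityMeasure P] (X : Set (Ω → ℝ)) (hX : IsModelSpace P X)
    (ρ : (Ω → ℝ) → ℝ) (hρ : IsConvexRiskMeasure P X ρ) :
    IsRepresentableOver P X ρ (kotheDual P X) ↔
      ∀ r : ℝ, IsClosed[weakTop P X (kotheDual P X)] {x : X | ρ x.1 ≤ r} :=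
  representable_iff_weakly_lsc_general P X hX ρ hρ
end

section
/- Let (Ω, 𝓔, ℙ) be a probability space, 1 ≤ p < ∞, and ρ : L^p(𝓔) → ℝ a convex risk measure. Then ρ has the Lebesgue property: whenever x_n → x almost surely with |x_n| ≤ y for all n for some y ∈ L^p(𝓔), one has ρ(x_n) → ρ(x). -/
/-!
Almost sure convergence under an `L^p` dominating function is `L^p`-norm convergence
(Vitali, `1 ≤ p < ∞`), so it suffices that `ρ`, read on the Banach lattice `L^p`, is norm
continuous. A convex function on a Banach space is continuous once it is bounded above near
one point, and an antitone convex function on a Banach lattice is bounded above near `0`: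
otherwise there are `u k` with `‖u k‖ < 2⁻ᵏ` and `ρ (u k) > k`, the series `∑ |u k|` converges,
and `-∑ |u k| ≤ u k` gives `ρ (-∑ |u k|) ≥ k` for every `k`.
-/

open MeasureTheory Filter Topology
open scoped ENNReal Topology

variable {Ω : Type*}

/-- The Lebesgue property: dominated a.s.-convergent sequences in `X` are mapped to
convergent sequences of risk values. -/
def LebesgueProperty [MeasurableSpace Ω] (P : Measure Ω) (X : Set (Ω → ℝ))
    (ρ : (Ω → ℝ) → ℝ) : Prop :=
  ∀ (xn : ℕ → Ω → ℝ) (x : Ω → ℝ), (∀ n, xn n ∈ X) → x ∈ X →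
    (∃ y ∈ X, ∀ n, ∀ᵐ ω ∂P, |xn n ω| ≤ y ω) →
    (∀ᵐ ω ∂P, Tendsto (fun n => xn n ω) atTop (nhds (x ω))) →
    Tendsto (fun n => ρ (xn n)) atTop (nhds (ρ x))

/-- `ρ` attains its representation: for every `x ∈ 𝓧` there is `y ∈ 𝓧^#` with
`ρ(x) = E[x y] - ρ^#(y)`. -/
def AttainsRepresentation [MeasurableSpace Ω] (P : Measure Ω) (X : Set (Ω → ℝ))
    (ρ : (Ω → ℝ) → ℝ) : Prop :=
  ∀ x ∈ X, ∃ y ∈ kotheDual P X,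
    (ρ x : EReal) = (((∫ ω, x ω * y ω ∂P : ℝ)) : EReal) - fenchel P X ρ y

/-- The Lebesgue space `L^p(𝓔)` as a set of measurable functions. -/
def LpSet [MeasurableSpace Ω] (P : Measure Ω) (p : ℝ≥0∞) : Set (Ω → ℝ) :=
  {x | Measurable x ∧ MemLp x p P}

open Set

theorem ConvexOn.continuous_of_antitone {E : Type*} [NormedAddCommGroup E] [Lattice E]
    [HasSolidNorm E] [IsOrderedAddMonoid E] [NormedSpace ℝ E] [CompleteSpace E] {f : E → ℝ}
    (hf : ConvexOn ℝ univ f) (hf' : Antitone f) : Continuous f := by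
  suffices (𝓝 (0 : E)).IsBoundedUnder (· ≤ ·) f by
    rw [← continuousOn_univ]
    have tfae := (hf.continuousOn_tfae isOpen_univ univ_nonempty).out 3 1
    exact tfae.mp ⟨0, mem_univ _, this⟩
  by_contra hunb
  simp only [IsBoundedUnder, IsBounded, not_exists, eventually_map, not_eventually, not_le] at hunb
  have hsmall (k : ℕ) : ∃ u : E, ‖u‖ < (1 / 2) ^ k ∧ (k : ℝ) < f u := by
    obtain ⟨u, hk, hu⟩ := ((hunb k).and_eventually
      (Metric.ball_mem_nhds 0 (by positivity : (0 : ℝ) < (1 / 2) ^ k))).exists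
    exact ⟨u, by simpa using hu, hk⟩
  choose u hu_norm hu_big using hsmall
  have hsum : Summable fun k => |u k| := .of_norm_bounded summable_geometric_two fun k =>
    (norm_abs_eq_norm (u k)).trans_le (hu_norm k).le
  have hbound (k : ℕ) : f (u k) ≤ f (-∑' j, |u j|) :=
    hf' <| (neg_le_neg (hsum.le_tsum k fun j _ => abs_nonneg _)).trans (neg_le.mp (neg_le_abs _))
  obtain ⟨k, hk⟩ := exists_nat_gt (f (-∑' j, |u j|))
  linarith [hu_big k, hbound k]

section Dominated

variable {α β ι : Type*} [MeasurableSpace α] [NormedAddCommGroup β] {μ : Measure α}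
  {p : ℝ≥0∞} {g : α → β}

theorem eLpNorm_indicator_mono_ae {f : α → β} (s : Set α) (hfg : ∀ᵐ a ∂μ, ‖f a‖ ≤ ‖g a‖) :
    eLpNorm (s.indicator f) p μ ≤ eLpNorm (s.indicator g) p μ :=
  eLpNorm_mono_ae <| hfg.mono fun a ha => by by_cases h : a ∈ s <;> simp [h, ha]

theorem unifIntegrable_of_dominated {f : ι → α → β} (hp : 1 ≤ p) (hp' : p ≠ ∞)
    (hg : MemLp g p μ) (hfg : ∀ i, ∀ᵐ a ∂μ, ‖f i a‖ ≤ ‖g a‖) : UnifIntegrable f p μ :=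
  fun _ hε =>
    let ⟨δ, hδ, hgδ⟩ := hg.eLpNorm_indicator_le hp hp' hε
    ⟨δ, hδ, fun i s hs hμs => (eLpNorm_indicator_mono_ae s (hfg i)).trans (hgδ s hs hμs)⟩

theorem unifTight_of_dominated {f : ι → α → β} (hp' : p ≠ ∞) (hg : MemLp g p μ)
    (hfg : ∀ i, ∀ᵐ a ∂μ, ‖f i a‖ ≤ ‖g a‖) : UnifTight f p μ := fun _ hε =>
  let ⟨s, hμs, hgs⟩ := unifTight_const (ι := Unit) hp' hg hε
  ⟨s, hμs, fun i => (eLpNorm_indicator_mono_ae sᶜ (hfg i)).trans (hgs ())⟩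

theorem tendsto_eLpNorm_sub_of_dominated {f : ℕ → α → β} {F : α → β} (hp : 1 ≤ p)
    (hp' : p ≠ ∞) (hf : ∀ n, AEStronglyMeasurable (f n) μ) (hF : MemLp F p μ)
    (hg : MemLp g p μ) (hfg : ∀ n, ∀ᵐ a ∂μ, ‖f n a‖ ≤ ‖g a‖)
    (hlim : ∀ᵐ a ∂μ, Tendsto (fun n => f n a) atTop (𝓝 (F a))) :
    Tendsto (fun n => eLpNorm (f n - F) p μ) atTop (𝓝 0) :=
  tendsto_Lp_of_tendsto_ae hp hp' hf hF (unifIntegrable_of_dominated hp hp' hg hfg)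
    (unifTight_of_dominated hp' hg hfg) hlim

end Dominated

theorem MeasureTheory.Lp.coeFn_mem_lpSet [MeasurableSpace Ω] {P : Measure Ω} {p : ℝ≥0∞}
    (f : Lp ℝ p P) : ⇑f ∈ LpSet P p :=
  ⟨(Lp.stronglyMeasurable f).measurable, Lp.memLp f⟩

namespace IsConvexRiskMeasure

variable [MeasurableSpace Ω] {P : Measure Ω} {p : ℝ≥0∞} {ρ : (Ω → ℝ) → ℝ}
  (hρ : IsConvexRiskMeasure P (LpSet P p) ρ)
include hρ

theorem congr_ae {x y : Ω → ℝ} (hx : x ∈ LpSet P p) (hy : y ∈ LpSet P p) (hxy : x =ᵐ[P] y) :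
    ρ x = ρ y :=
  le_antisymm (hρ.2.1 _ hy _ hx hxy.symm.le) (hρ.2.1 _ hx _ hy hxy.le)

theorem antitone_lp : Antitone fun f : Lp ℝ p P => ρ f := fun f g hfg =>
  hρ.2.1 _ (Lp.coeFn_mem_lpSet f) _ (Lp.coeFn_mem_lpSet g) ((Lp.coeFn_le f g).mpr hfg)

theorem convexOn_lp [Fact (1 ≤ p)] : ConvexOn ℝ univ fun f : Lp ℝ p P => ρ f := by
  refine ⟨convex_univ, fun f _ g _ a b ha hb hab => ?_⟩
  obtain rfl : b = 1 - a := by linarith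
  have hcomb : (fun ω => a * f ω + (1 - a) * g ω) ∈ LpSet P p :=
    ⟨((Lp.stronglyMeasurable f).measurable.const_mul a).add
      ((Lp.stronglyMeasurable g).measurable.const_mul _),
      ((Lp.memLp f).const_mul a).add ((Lp.memLp g).const_mul _)⟩
  have hae : ⇑(a • f + (1 - a) • g) =ᵐ[P] fun ω => a * f ω + (1 - a) * g ω := by
    filter_upwards [Lp.coeFn_add (a • f) ((1 - a) • g), Lp.coeFn_smul a f,
      Lp.coeFn_smul (1 - a) g] with ω h1 h2 h3
    simp only [h1, Pi.add_apply, h2, h3, Pi.smul_apply, smul_eq_mul]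
  change ρ _ ≤ a * ρ f + (1 - a) * ρ g
  rw [hρ.congr_ae (Lp.coeFn_mem_lpSet _) hcomb hae]
  exact hρ.1 _ (Lp.coeFn_mem_lpSet f) _ (Lp.coeFn_mem_lpSet g) a ha (by linarith)

theorem continuous_lp [Fact (1 ≤ p)] : Continuous fun f : Lp ℝ p P => ρ f :=
  hρ.convexOn_lp.continuous_of_antitone hρ.antitone_lp

theorem apply_toLp {x : Ω → ℝ} (hx : x ∈ LpSet P p) : ρ (hx.2.toLp x) = ρ x :=
  hρ.congr_ae (Lp.coeFn_mem_lpSet _) hx hx.2.coeFn_toLp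

end IsConvexRiskMeasure

theorem lebesgueProperty_of_Lp_general [MeasurableSpace Ω] (P : Measure Ω)
    (p : ℝ≥0∞) (hp : 1 ≤ p) (hp' : p ≠ ∞)
    (ρ : (Ω → ℝ) → ℝ) (hρ : IsConvexRiskMeasure P (LpSet P p) ρ) :
    LebesgueProperty P (LpSet P p) ρ := by
  rintro xn x hxn hx ⟨y, hy, hdom⟩ hlim
  have : Fact (1 ≤ p) := ⟨hp⟩
  have hdom' (n : ℕ) : ∀ᵐ ω ∂P, ‖xn n ω‖ ≤ ‖y ω‖ :=
    (hdom n).mono fun ω h => by simpa only [Real.norm_eq_abs] using h.trans (le_abs_self _)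
  have hconv : Tendsto (fun n => (hxn n).2.toLp (xn n)) atTop (𝓝 (hx.2.toLp x)) :=
    (Lp.tendsto_Lp_iff_tendsto_eLpNorm'' _ _ _ _).mpr <| tendsto_eLpNorm_sub_of_dominated hp hp'
      (fun n => (hxn n).2.1) hx.2 hy.2 hdom' hlim
  simpa only [Function.comp_def, hρ.apply_toLp (hxn _), hρ.apply_toLp hx] using
    (hρ.continuous_lp.tendsto _).comp hconv

/-- every convex risk measure on `L^p(𝓔)`, `1 ≤ p < ∞`, has the Lebesgue
property. -/
theorem lebesgueProperty_of_Lp [MeasurableSpace Ω] (P : Measure Ω)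
    [IsProbabilityMeasure P] (p : ℝ≥0∞) (hp : 1 ≤ p) (hp' : p ≠ ∞)
    (ρ : (Ω → ℝ) → ℝ) (hρ : IsConvexRiskMeasure P (LpSet P p) ρ) :
    LebesgueProperty P (LpSet P p) ρ :=
  lebesgueProperty_of_Lp_general P p hp hp' ρ hρ
end
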